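/- Let Γ and Δ be maximally Log-consistent sets. If Γ[I] ⊆ Δ, then Γ[⊞] ⊆ Δ (i.e. the canonical intention relation →^c is contained in the canonical global relation ∼⊞). -/
import Mathlib


/-- Formulas of classical propositional logic `L_CPL` over a countable set
of atomic propositions (represented by natural numbers). -/
inductive CPL : Type
  | top : CPL
  | atom : ℕ → CPL
  | neg : CPL → CPL
  | or : CPL → CPL → CPL
  | and : CPL → CPL → CPL
  deriving DecidableEq
/-- `Var(φ)`: the (finite) set of atomic propositions occurring in `φ`. -/
def CPL.var : CPL → Finset ℕ
  | .top => ∅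
  | .atom p => {p}
  | .neg φ => φ.var
  | .or φ ψ => φ.var ∪ ψ.var
  | .and φ ψ => φ.var ∪ ψ.var

/-- `p̄ := p ∨ ¬p`. -/
def pbar (p : ℕ) : CPL := .or (.atom p) (.neg (.atom p))

/-- Conjunction of a list of `L_CPL` formulas (empty conjunction is `⊤`). -/
def conjList : List CPL → CPL
  | [] => .top
  | [α] => α
  | α :: β :: rest => .and α (conjList (β :: rest))

/-- `φ̄ := ⋀_{p ∈ Var(φ)} (p ∨ ¬p)`, with the conjuncts taken in the fixed
(increasing) enumeration order of the atomic propositions. -/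
def CPL.bar (φ : CPL) : CPL := conjList ((φ.var.sort (· ≤ ·)).map pbar)
/-- Formulas of the language `L_Int`, extending `L_CPL` (embedded via `of`) by
negation, disjunction, conjunction, the global modality `⊞` (`box`) and the
intention modality `I` (`int`), which applies only to `L_CPL` formulas. -/
inductive Form : Type
  | of : CPL → Form
  | neg : Form → Form
  | or : Form → Form → Form
  | and : Form → Form → Form
  | box : Form → Form
  | int : CPL → Form
  deriving DecidableEq
/-- Material implication in `L_Int`: `φ → ψ := ¬φ ∨ ψ`. -/
def Form.imp (φ ψ : Form) : Form := .or (.neg φ) ψ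

/-- Material biconditional in `L_Int`: `φ ↔ ψ := (φ → ψ) ∧ (ψ → φ)`. -/
def Form.iff (φ ψ : Form) : Form := .and (φ.imp ψ) (ψ.imp φ)

/-- `⊥ := ¬⊤`. -/
def Form.bot : Form := .neg (.of .top)

/-- Boolean evaluation of `L_CPL` formulas under a valuation of the atoms. -/
def CPL.eval (v : ℕ → Bool) : CPL → Bool
  | .top => true
  | .atom p => v p
  | .neg φ => !φ.eval v
  | .or φ ψ => φ.eval v || ψ.eval v
  | .and φ ψ => φ.eval v && ψ.eval v

/-- Boolean evaluation of `L_Int` formulas, treating `⊞`- and `I`-formulas as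
atoms (evaluated by `u`). -/
def Form.eval (v : ℕ → Bool) (u : Form → Bool) : Form → Bool
  | .of α => α.eval v
  | .neg φ => !φ.eval v u
  | .or φ ψ => φ.eval v u || ψ.eval v u
  | .and φ ψ => φ.eval v u && ψ.eval v u
  | .box φ => u (.box φ)
  | .int α => u (.int α)

/-- Classical propositional tautologies of `L_Int` (with modal formulas
treated as atoms). -/
def Taut (φ : Form) : Prop := ∀ v u, φ.eval v u = true

/-- Derivability in the proof system `Log`: classical tautologies and Modus
Ponens; `S5` axioms and necessitation for `⊞`; and the intention axioms
Ax1: `I⊤`; Ax2: `Iφ → Iφ̄`; Ax3: `Iφ → ¬I¬φ`; Ax4: `(Iφ ∧ Iψ) ↔ I(φ ∧ ψ)`;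
Ax5: `⊞(ψ → φ) → ((Iψ ∧ Iφ̄) → Iφ)`. -/
inductive Deriv : Set Form → Form → Prop
  | prem {Γ : Set Form} {φ : Form} : φ ∈ Γ → Deriv Γ φ
  | taut {Γ : Set Form} {φ : Form} : Taut φ → Deriv Γ φ
  | mp {Γ : Set Form} {φ ψ : Form} :
      Deriv Γ (φ.imp ψ) → Deriv Γ φ → Deriv Γ ψ
  | boxK {Γ : Set Form} (φ ψ : Form) :
      Deriv Γ ((Form.box (φ.imp ψ)).imp ((Form.box φ).imp (Form.box ψ)))
  | boxT {Γ : Set Form} (φ : Form) : Deriv Γ ((Form.box φ).imp φ)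
  | box5 {Γ : Set Form} (φ : Form) :
      Deriv Γ ((Form.neg (Form.box φ)).imp (Form.box (Form.neg (Form.box φ))))
  | nec {Γ : Set Form} {φ : Form} : Deriv ∅ φ → Deriv Γ (Form.box φ)
  | ax1 {Γ : Set Form} : Deriv Γ (Form.int .top)
  | ax2 {Γ : Set Form} (α : CPL) :
      Deriv Γ ((Form.int α).imp (Form.int α.bar))
  | ax3 {Γ : Set Form} (α : CPL) :
      Deriv Γ ((Form.int α).imp (Form.neg (Form.int (CPL.neg α))))
  | ax4 {Γ : Set Form} (α β : CPL) :
      Deriv Γ ((Form.and (.int α) (.int β)).iff (Form.int (.and α β)))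
  | ax5 {Γ : Set Form} (α β : CPL) :
      Deriv Γ ((Form.box ((Form.of β).imp (Form.of α))).imp
        ((Form.and (.int β) (.int α.bar)).imp (Form.int α)))

/-- A set of formulas is `Log`-consistent if `⊥` is not derivable from it. -/
def LogConsistent (Γ : Set Form) : Prop := ¬ Deriv Γ Form.bot

/-- A maximally `Log`-consistent set: consistent with no proper consistent
extension. -/
def MCS (Γ : Set Form) : Prop :=
  LogConsistent Γ ∧ ∀ Δ, LogConsistent Δ → Γ ⊆ Δ → Δ = Γ
/-- `Γ[⊞] = {φ : ⊞φ ∈ Γ}`. -/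
def boxSet (Γ : Set Form) : Set Form := {φ | Form.box φ ∈ Γ}

/-- `Γ[I] = {φ ∈ L_Int : Iψ ∧ ⊞(ψ → φ) ∈ Γ for some ψ ∈ L_CPL}`. -/
def intSet (Γ : Set Form) : Set Form :=
  {φ | ∃ ψ : CPL, Form.and (Form.int ψ) (Form.box ((Form.of ψ).imp φ)) ∈ Γ}

lemma deriv_cut {Γ : Set Form} {φ χ : Form}
    (hχ : Deriv (insert φ Γ) χ) (hφ : Deriv Γ φ) : Deriv Γ χ := by
  generalize hE : insert φ Γ = E at hχ
  induction hχ with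
  | prem hm =>
      rw [← hE] at hm
      rcases hm with rfl | hm
      · exact hφ
      · exact Deriv.prem hm
  | taut ht => exact Deriv.taut ht
  | mp _ _ ih1 ih2 => exact Deriv.mp (ih1 hE) (ih2 hE)
  | boxK φ ψ => exact Deriv.boxK φ ψ
  | boxT φ => exact Deriv.boxT φ
  | box5 φ => exact Deriv.box5 φ
  | nec h => exact Deriv.nec h
  | ax1 => exact Deriv.ax1
  | ax2 α => exact Deriv.ax2 α
  | ax3 α => exact Deriv.ax3 α
  | ax4 α β => exact Deriv.ax4 α β
  | ax5 α β => exact Deriv.ax5 α β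

lemma mcs_mem_of_deriv {Γ : Set Form} (hΓ : MCS Γ) {φ : Form}
    (hd : Deriv Γ φ) : φ ∈ Γ := by
  by_cases hc : LogConsistent (insert φ Γ)
  · have := hΓ.2 _ hc (Set.subset_insert _ _)
    rw [← this]; exact Set.mem_insert _ _
  · exact absurd (deriv_cut (not_not.mp hc) hd) hΓ.1

/-- For maximally `Log`-consistent sets `Γ, Δ`: if `Γ[I] ⊆ Δ`
then `Γ[⊞] ⊆ Δ` (the canonical intention relation is contained in the
canonical global relation). -/
theorem intSet_subset_implies_boxSet_subset (Γ Δ : Set Form)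
    (hΓ : MCS Γ) (hΔ : MCS Δ) (h : intSet Γ ⊆ Δ) : boxSet Γ ⊆ Δ := by
  intro φ hφ
  apply h
  refine ⟨CPL.top, mcs_mem_of_deriv hΓ ?_⟩
  have d1 : Deriv Γ (Form.int .top) := Deriv.ax1
  have dbox : Deriv Γ (Form.box φ) := Deriv.prem hφ
  have t1 : Taut (φ.imp ((Form.of .top).imp φ)) := by
    intro v u
    simp [Form.eval, Form.imp, CPL.eval]
  have d2 : Deriv Γ (Form.box ((Form.of .top).imp φ)) :=
    Deriv.mp (Deriv.mp (Deriv.boxK _ _) (Deriv.nec (Deriv.taut t1))) dbox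
  have t2 : Taut ((Form.int .top).imp
      ((Form.box ((Form.of .top).imp φ)).imp
        (Form.and (Form.int .top) (Form.box ((Form.of .top).imp φ))))) := by
    intro v u
    simp only [Form.eval, Form.imp]
    cases u (Form.int CPL.top) <;>
      cases u (Form.box (Form.or (Form.neg (Form.of CPL.top)) φ)) <;> rfl
  exact Deriv.mp (Deriv.mp (Deriv.taut t2) d1) d2
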